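/- arXiv:2308.09860 — 3 statements merged into one kernel-verified Lean document; each statement's English description precedes it below -/
import Mathlib

section
/- Let M be a matroid on a finite ground set E and let I be a modular ideal of M. Then every independent set of M belongs to I. -/
open Set

/-- The rank of a set `S` in a matroid `M`: the largest cardinality of an independent
subset of `S`. -/
noncomputable def Matroid.rk' {α : Type*} (M : Matroid α) (S : Set α) : ℕ :=
  sSup (Set.ncard '' {I : Set α | M.Indep I ∧ I ⊆ S})

/-- A circuit of `M`: a minimal dependent set, i.e. a dependent set all of whose proper
subsets are independent. -/
def Matroid.IsCircuit' {α : Type*} (M : Matroid α) (C : Set α) : Prop :=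
  M.Dep C ∧ ∀ D : Set α, D ⊂ C → M.Indep D

/-- `S` and `T` form a modular pair in `M`: `rk(S ∩ T) + rk(S ∪ T) = rk S + rk T`. -/
def Matroid.ModularPairSets {α : Type*} (M : Matroid α) (S T : Set α) : Prop :=
  M.rk' (S ∩ T) + M.rk' (S ∪ T) = M.rk' S + M.rk' T

/-- A modular ideal of `M`: a nonempty downward-closed family of subsets containing `{e}`
for every non-loop `e` and closed under unions of modular pairs. -/
def Matroid.ModularIdeal {α : Type*} (M : Matroid α) (I : Set (Set α)) : Prop :=
  I.Nonempty ∧ (∀ A B : Set α, A ⊆ B → B ∈ I → A ∈ I) ∧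
    (∀ e : α, M.Indep {e} → {e} ∈ I) ∧
    (∀ A B : Set α, A ∈ I → B ∈ I → M.ModularPairSets A B → A ∪ B ∈ I)

/-- A linear class of circuits of `M`: a set `L` of circuits such that whenever
`X, Y ∈ L` form a modular pair, every circuit `Z ⊆ X ∪ Y` belongs to `L`. -/
def Matroid.LinearClass {α : Type*} (M : Matroid α) (L : Set (Set α)) : Prop :=
  (∀ C ∈ L, M.IsCircuit' C) ∧
    ∀ X ∈ L, ∀ Y ∈ L, M.ModularPairSets X Y →
      ∀ Z : Set α, M.IsCircuit' Z → Z ⊆ X ∪ Y → Z ∈ L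

/-! Within an independent set rank is cardinality, so by inclusion–exclusion any two subsets of a
finite independent set form a modular pair. A finite independent set is therefore built up from `∅`
inside the ideal by adjoining one (non-loop) singleton at a time. -/

namespace Matroid

variable {α : Type*} {M : Matroid α}

theorem rk'_eq_ncard_of_indep {S : Set α} (hS : M.Indep S) (hfin : S.Finite) :
    M.rk' S = S.ncard := by
  refine le_antisymm (csSup_le ⟨S.ncard, S, ⟨hS, subset_rfl⟩, rfl⟩ ?_) ?_
  · rintro n ⟨J, ⟨-, hJS⟩, rfl⟩
    exact ncard_le_ncard hJS hfin
  · refine le_csSup ⟨S.ncard, ?_⟩ ⟨S, ⟨hS, subset_rfl⟩, rfl⟩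
    rintro n ⟨J, ⟨-, hJS⟩, rfl⟩
    exact ncard_le_ncard hJS hfin

theorem modularPairSets_of_indep_union {S T : Set α} (hST : M.Indep (S ∪ T))
    (hfin : (S ∪ T).Finite) : M.ModularPairSets S T := by
  have hS := hfin.subset subset_union_left
  have hT := hfin.subset subset_union_right
  unfold ModularPairSets
  rw [rk'_eq_ncard_of_indep (hST.subset (inter_subset_left.trans subset_union_left))
      (hS.subset inter_subset_left), rk'_eq_ncard_of_indep hST hfin,
    rk'_eq_ncard_of_indep (hST.subset subset_union_left) hS,
    rk'_eq_ncard_of_indep (hST.subset subset_union_right) hT]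
  exact ncard_inter_add_ncard_union S T hS hT

theorem ModularIdeal.mem_of_indep {I : Set (Set α)} (hI : M.ModularIdeal I) {S : Set α}
    (hS : M.Indep S) (hfin : S.Finite) : S ∈ I := by
  obtain ⟨⟨B, hB⟩, hdown, hsingle, hunion⟩ := hI
  induction S, hfin using Set.Finite.induction_on with
  | empty => exact hdown ∅ B (empty_subset B) hB
  | @insert e T _ hT ih =>
    rw [← singleton_union] at hS ⊢
    exact hunion {e} T (hsingle e (hS.subset subset_union_left)) (ih (hS.subset subset_union_right))
      (modularPairSets_of_indep_union hS (finite_singleton e |>.union hT))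

end Matroid

theorem indep_mem_modularIdeal_general
    {α : Type*} [Fintype α] (M : Matroid α)
    (I : Set (Set α)) (hI : M.ModularIdeal I) :
    ∀ S : Set α, M.Indep S → S ∈ I :=
  fun S hS => hI.mem_of_indep hS S.toFinite

/-- Every independent set of `M` belongs to every modular ideal of `M`. -/
theorem indep_mem_modularIdeal
    {α : Type*} [Fintype α] (M : Matroid α) (hE : M.E = Set.univ)
    (I : Set (Set α)) (hI : M.ModularIdeal I) :
    ∀ S : Set α, M.Indep S → S ∈ I :=
  indep_mem_modularIdeal_general M I hI
end

section
/- Let M be a matroid on a finite ground set E and let I be a modular ideal of M. Then for every S ⊆ E, S ∈ I if and only if S is independent in M, or there exists a basis B of S in M (a maximal independent subset B ⊆ S) such that for every s ∈ S \ B the fundamental circuit C_B(s) — the unique circuit of M contained in B ∪ {s} and containing s — belongs to I. -/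
open Set

/-! Downward closure gives one direction. Conversely, grow the basis `B` to `S` one element
`s ∈ S \ B` at a time: the fundamental circuit `C` of `s` meets the current set `X ⊇ B` in
`C \ {s}`, which spans `C`, so `X` and `C` form a modular pair with `X ∪ C = insert s X`. -/

namespace Matroid

variable {α : Type*} {M : Matroid α} {I : Set (Set α)} {A B C S X Y : Set α}

lemma isCircuit'_iff : M.IsCircuit' C ↔ M.IsCircuit C :=
  isCircuit_iff_forall_ssubset.symm

lemma cast_rk'_eq_eRk [M.RankFinite] (X : Set α) : (M.rk' X : ℕ∞) = M.eRk X := by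
  obtain ⟨I, hI⟩ := M.exists_isBasis' X
  have hIfin : I.Finite := hI.indep.finite
  have hgreatest : IsGreatest (ncard '' {J | M.Indep J ∧ J ⊆ X}) I.ncard := by
    refine ⟨⟨I, ⟨hI.indep, hI.subset⟩, rfl⟩, ?_⟩
    rintro _ ⟨J, ⟨hJ, hJX⟩, rfl⟩
    have hle := hJ.encard_le_eRk_of_subset hJX
    rw [← hI.encard_eq_eRk, ← hJ.finite.cast_ncard_eq, ← hIfin.cast_ncard_eq] at hle
    exact_mod_cast hle
  rw [rk', hgreatest.csSup_eq, hIfin.cast_ncard_eq, hI.encard_eq_eRk]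

lemma modularPairSets_iff_eRk [M.RankFinite] :
    M.ModularPairSets X Y ↔ M.eRk (X ∩ Y) + M.eRk (X ∪ Y) = M.eRk X + M.eRk Y := by
  rw [ModularPairSets, ← Nat.cast_inj (R := ℕ∞)]
  push_cast
  simp only [cast_rk'_eq_eRk]

lemma Indep.modularPairSets [M.RankFinite] (h : M.Indep (X ∪ Y)) : M.ModularPairSets X Y := by
  rw [modularPairSets_iff_eRk, (h.subset (inter_subset_left.trans subset_union_left)).eRk_eq_encard,
    h.eRk_eq_encard, (h.subset subset_union_left).eRk_eq_encard,
    (h.subset subset_union_right).eRk_eq_encard, add_comm, encard_union_add_encard_inter]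

lemma modularPairSets_of_subset_closure_inter [M.RankFinite] (h : Y ⊆ M.closure (X ∩ Y)) :
    M.ModularPairSets X Y := by
  have hinter : M.eRk (X ∩ Y) = M.eRk Y :=
    M.eRk_eq_eRk_of_subset_of_le inter_subset_right
      ((M.eRk_mono h).trans (M.eRk_closure_eq _).le)
  have hunion : M.eRk (X ∪ Y) = M.eRk X := by
    refine ((M.eRk_eq_eRk_of_subset_of_le subset_union_left ?_)).symm
    calc M.eRk (X ∪ Y) ≤ M.eRk (X ∪ M.closure (X ∩ Y)) :=
          M.eRk_mono (union_subset_union_right X h)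
      _ = M.eRk X := by rw [eRk_union_closure_right_eq, union_eq_left.2 inter_subset_left]
  rw [modularPairSets_iff_eRk, hinter, hunion, add_comm]

namespace ModularIdeal

lemma mem_of_subset (hI : M.ModularIdeal I) (hB : B ∈ I) (hAB : A ⊆ B) : A ∈ I :=
  hI.2.1 A B hAB hB

lemma empty_mem (hI : M.ModularIdeal I) : ∅ ∈ I :=
  let ⟨_, hT⟩ := hI.1
  hI.mem_of_subset hT (empty_subset _)

lemma union_mem (hI : M.ModularIdeal I) (hA : A ∈ I) (hB : B ∈ I)
    (hAB : M.ModularPairSets A B) : A ∪ B ∈ I :=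
  hI.2.2.2 A B hA hB hAB

lemma mem_of_indep_s10 [M.RankFinite] (hI : M.ModularIdeal I) (hA : M.Indep A) : A ∈ I := by
  induction A, hA.finite using Set.Finite.induction_on with
  | empty => exact hI.empty_mem
  | @insert e A _ _ ih =>
    rw [← union_singleton] at hA ⊢
    exact hI.union_mem (ih (hA.subset subset_union_left))
      (hI.2.2.1 e (hA.subset subset_union_right)) hA.modularPairSets

lemma union_mem_of_isCircuit [M.RankFinite] (hI : M.ModularIdeal I) (hX : X ∈ I) (hC : C ∈ I)
    (hCc : M.IsCircuit C) {e : α} (hCX : C \ {e} ⊆ X) : X ∪ C ∈ I := by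
  refine hI.union_mem hX hC (modularPairSets_of_subset_closure_inter ?_)
  exact (hCc.subset_closure_sdiff_singleton e).trans
    (M.closure_subset_closure (subset_inter hCX sdiff_subset))

lemma mem_of_forall_fundCircuit_mem [M.RankFinite] (hI : M.ModularIdeal I) (hB : M.IsBasis B S)
    (hS : S.Finite) (hfc : ∀ s ∈ S \ B, M.fundCircuit s B ∈ I) : S ∈ I := by
  suffices B ∪ (S \ B) ∈ I by rwa [union_sdiff_cancel hB.subset] at this
  refine Set.Finite.induction_on_subset (motive := fun F _ => B ∪ F ∈ I) (S \ B) hS.sdiff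
    (by simpa using hI.mem_of_indep_s10 hB.indep) ?_
  intro s F hs _ _ ih
  have hCB : M.fundCircuit s B \ {s} ⊆ B :=
    sdiff_singleton_subset_iff.2 (M.fundCircuit_subset_insert s B)
  have hunion := hI.union_mem_of_isCircuit ih (hfc s hs)
    (hB.indep.fundCircuit_isCircuit (hB.subset_closure hs.1) hs.2)
    (hCB.trans subset_union_left)
  refine hI.mem_of_subset hunion ?_
  rw [union_insert]
  exact insert_subset (Or.inr (M.mem_fundCircuit s B)) subset_union_left

end ModularIdeal

end Matroid

/-- A set `S` belongs to a modular ideal `I` iff `S` is independent or there is a basis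
`B` of `S` all of whose fundamental circuits `C_B(s)`, `s ∈ S \ B`, belong to `I`. -/
theorem mem_modularIdeal_iff_exists_basis
    {α : Type*} [Fintype α] (M : Matroid α) (hE : M.E = Set.univ)
    (I : Set (Set α)) (hI : M.ModularIdeal I) (S : Set α) :
    S ∈ I ↔
      (M.Indep S ∨
        ∃ B : Set α, M.IsBasis B S ∧
          ∀ s ∈ S \ B, ∀ C : Set α,
            M.IsCircuit' C → s ∈ C → C ⊆ B ∪ {s} → C ∈ I) := by
  have hSE : S ⊆ M.E := hE ▸ subset_univ S
  constructor
  · intro hS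
    obtain ⟨B, hB⟩ := M.exists_isBasis S hSE
    refine .inr ⟨B, hB, fun s hs C _ _ hCB => hI.mem_of_subset hS (hCB.trans ?_)⟩
    exact union_subset hB.subset (singleton_subset_iff.2 hs.1)
  · rintro (hS | ⟨B, hB, hfc⟩)
    · exact hI.mem_of_indep_s10 hS
    refine hI.mem_of_forall_fundCircuit_mem hB S.toFinite fun s hs =>
      hfc s hs _ ?_ (M.mem_fundCircuit s B) ?_
    · exact Matroid.isCircuit'_iff.2 <|
        hB.indep.fundCircuit_isCircuit (hB.subset_closure hs.1) hs.2
    · rw [union_singleton]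
      exact M.fundCircuit_subset_insert s B
end

section
/- Let E be a type, v : E → EuclideanSpace ℝ (Fin d) a family whose span is all of EuclideanSpace ℝ (Fin d), and c : E → ℝ. Then there exists a finite subset S ⊆ E of cardinality d + 1 that is central (i.e. there exists x with ⟪v e, x⟫ = c e for all e ∈ S) if and only if there exists a circuit X of v that is central. (A Pythagorean arrangement fails to be gain-generic exactly when some circuit of the matroid at infinity is central.) -/
/-! A circuit has at most `d + 1` elements, and `d + 1` vectors in `ℝ^d` are dependent, hence
contain a circuit; centrality passes to subsets. Conversely, grow a central dependent set `T`: while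
`|T| ≤ d` the vectors `v e`, `e ∈ T`, span a proper subspace `W`, so some `v e ∉ W`, and moving the
common solution along a vector of `Wᗮ` not orthogonal to `v e` solves the equation for `e` without
disturbing those of `T`. -/

/-- `X` is a circuit of the family of vectors `v`: the family `(v e)_{e ∈ X}` is linearly
dependent, but `(v e)_{e ∈ X'}` is linearly independent for every proper subset `X' ⊊ X`. -/
def IsVecCircuit {E : Type*} {d : ℕ} (v : E → EuclideanSpace ℝ (Fin d)) (X : Finset E) : Prop :=
  ¬ LinearIndependent ℝ (fun e : X => v e.1) ∧
    ∀ Y : Finset E, Y ⊂ X → LinearIndependent ℝ (fun e : Y => v e.1)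

/-- A set `S` is central for the data `(v, c)` when the linear system
`⟪v e, x⟫ = c e` (for `e ∈ S`) has a common solution `x`. -/
def IsCentral {E : Type*} {d : ℕ} (v : E → EuclideanSpace ℝ (Fin d)) (c : E → ℝ)
    (S : Set E) : Prop :=
  ∃ x : EuclideanSpace ℝ (Fin d), ∀ e ∈ S, (inner ℝ (v e) x : ℝ) = c e

open Module Submodule

section Module

variable {E K M : Type*} [DivisionRing K] [AddCommGroup M] [Module K M] {v : E → M}

theorem Finset.card_le_finrank_of_linearIndepOn [FiniteDimensional K M] {T : Finset E}
    (h : LinearIndepOn K v (T : Set E)) :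
    T.card ≤ finrank K M := by
  simpa using h.fintype_card_le_finrank

theorem exists_notMem_span_image_of_not_linearIndepOn (hspan : span K (Set.range v) = ⊤)
    {T : Finset E} (hdep : ¬ LinearIndepOn K v (T : Set E)) (hcard : T.card ≤ finrank K M) :
    ∃ e, v e ∉ span K (v '' T) := by
  have hlt : finrank K (span K (v '' T)) < finrank K M := by
    rw [LinearIndepOn, linearIndependent_iff_card_le_finrank_span, not_le] at hdep
    rw [Set.image_eq_range]
    exact hdep.trans_le (by simpa using hcard)
  by_contra! h
  have htop : span K (v '' T) = ⊤ :=
    eq_top_iff.2 (hspan ▸ span_le.2 (Set.range_subset_iff.2 h))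
  rw [htop, finrank_top] at hlt
  exact lt_irrefl _ hlt

end Module

section Central

variable {E : Type*} {d : ℕ} {v : E → EuclideanSpace ℝ (Fin d)} {c : E → ℝ}

theorem exists_isVecCircuit_subset {S : Finset E} (hS : ¬ LinearIndepOn ℝ v (S : Set E)) :
    ∃ X ⊆ S, IsVecCircuit v X := by
  obtain ⟨X, hXS, hX⟩ :=
    exists_minimal_le_of_wellFoundedLT (fun Y : Finset E => ¬ LinearIndepOn ℝ v (Y : Set E)) S hS
  exact ⟨X, hXS, hX.prop, fun Y hY => not_not.1 (hX.not_prop_of_lt hY)⟩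

theorem IsVecCircuit.card_le {X : Finset E} (hX : IsVecCircuit v X) : X.card ≤ d + 1 := by
  classical
  obtain ⟨a, ha⟩ : X.Nonempty := by
    rw [Finset.nonempty_iff_ne_empty]
    rintro rfl
    exact hX.1 linearIndependent_empty_type
  have := Finset.card_le_finrank_of_linearIndepOn (hX.2 _ (Finset.erase_ssubset ha))
  rw [finrank_euclideanSpace_fin, Finset.card_erase_of_mem ha] at this
  omega

theorem IsCentral.mono {S T : Set E} (hT : IsCentral v c T) (hST : S ⊆ T) : IsCentral v c S :=
  let ⟨x, hx⟩ := hT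
  ⟨x, fun e he => hx e (hST he)⟩

theorem IsCentral.insert_of_notMem_span {T : Set E} {e : E} (hT : IsCentral v c T)
    (he : v e ∉ span ℝ (v '' T)) : IsCentral v c (insert e T) := by
  obtain ⟨x, hx⟩ := hT
  obtain ⟨y, hy, hey⟩ : ∃ y ∈ (span ℝ (v '' T))ᗮ, inner ℝ (v e) y ≠ 0 := by
    rw [← orthogonal_orthogonal (span ℝ (v '' T)), mem_orthogonal] at he
    push Not at he
    obtain ⟨y, hy, hey⟩ := he
    exact ⟨y, hy, by rwa [real_inner_comm]⟩
  refine ⟨x + ((c e - inner ℝ (v e) x) / inner ℝ (v e) y) • y, ?_⟩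
  rintro f (rfl | hf)
  · rw [inner_add_right, real_inner_smul_right, div_mul_cancel₀ _ hey]
    ring
  · have hfy : inner ℝ (v f) y = 0 :=
      (mem_orthogonal _ _).1 hy _ (subset_span (Set.mem_image_of_mem v hf))
    rw [inner_add_right, real_inner_smul_right, hfy, mul_zero, add_zero, hx f hf]

theorem IsCentral.exists_card_eq_succ (hspan : span ℝ (Set.range v) = ⊤) {T : Finset E}
    (hT : IsCentral v c T) (hdep : ¬ LinearIndepOn ℝ v (T : Set E)) (hcard : T.card ≤ d + 1) :
    ∃ S : Finset E, S.card = d + 1 ∧ IsCentral v c S := by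
  classical
  induction hn : d + 1 - T.card generalizing T with
  | zero => exact ⟨T, by omega, hT⟩
  | succ n ih =>
    obtain ⟨e, he⟩ := exists_notMem_span_image_of_not_linearIndepOn hspan hdep
      (by rw [finrank_euclideanSpace_fin]; omega)
    have heT : e ∉ T := fun h => he (subset_span (Set.mem_image_of_mem v h))
    have hcard' : (insert e T).card = T.card + 1 := Finset.card_insert_of_notMem heT
    refine ih (T := insert e T) ?_ (fun h => hdep (h.mono ?_)) (by omega) (by omega)
    · rw [Finset.coe_insert]
      exact hT.insert_of_notMem_span he
    · exact Finset.coe_subset.2 (Finset.subset_insert e T)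

end Central

/-- For a spanning family `v`, there is a central subset of cardinality `d + 1`
if and only if there is a central circuit of `v`. -/
theorem exists_central_card_succ_iff_exists_central_circuit
    {E : Type*} {d : ℕ} (v : E → EuclideanSpace ℝ (Fin d)) (c : E → ℝ)
    (hspan : Submodule.span ℝ (Set.range v) = ⊤) :
    (∃ S : Finset E, S.card = d + 1 ∧ IsCentral v c S) ↔
      ∃ X : Finset E, IsVecCircuit v X ∧ IsCentral v c X := by
  constructor
  · rintro ⟨S, hScard, hS⟩
    have hdep : ¬ LinearIndepOn ℝ v (S : Set E) := fun h => by
      have := Finset.card_le_finrank_of_linearIndepOn h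
      rw [finrank_euclideanSpace_fin] at this
      omega
    obtain ⟨X, hXS, hX⟩ := exists_isVecCircuit_subset hdep
    exact ⟨X, hX, hS.mono (Finset.coe_subset.2 hXS)⟩
  · rintro ⟨X, hX, hXc⟩
    exact hXc.exists_card_eq_succ hspan hX.1 hX.card_le
end
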